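/- Let n ≥ 3. Then the number of permutations p of {1,…,n} in which the first entry p_1 has exactly one child in the minmax tree T^m_p is exactly 2·n!/3. -/

import Mathlib

/-- Binary trees with natural-number labels, used to model minmax trees of
permutations. -/
inductive BTree where
  | nil : BTree
  | node : ℕ → BTree → BTree → BTree
deriving DecidableEq, Repr

namespace BTree

/-- The label of the root (if any). -/
def rootVal : BTree → Option ℕ
  | .nil => none
  | .node v _ _ => some v

/-- Whether the value `x` occurs as a label in the tree. -/
def memB : BTree → ℕ → Bool
  | .nil, _ => false
  | .node v l r, x => (x == v) || memB l x || memB r x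

/-- The number of children of the (unique, for permutations) node labelled `x`. -/
def numChildren : BTree → ℕ → ℕ
  | .nil, _ => 0
  | .node v l r, x =>
      if x = v then (if l = .nil then 0 else 1) + (if r = .nil then 0 else 1)
      else numChildren l x + numChildren r x

/-- `x` is a leaf of the tree: it occurs in the tree and has no children. -/
def IsLeaf (t : BTree) (x : ℕ) : Prop := t.memB x = true ∧ t.numChildren x = 0

instance (t : BTree) (x : ℕ) : Decidable (t.IsLeaf x) := by unfold IsLeaf; infer_instance

/-- `childB t x y = true` iff `x` is a child of `y` in `t`, i.e. `x` is the root of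
the left or the right subtree hanging from `y`. -/
def childB : BTree → ℕ → ℕ → Bool
  | .nil, _, _ => false
  | .node v l r, x, y =>
      ((y == v) && (l.rootVal == some x || r.rootVal == some x))
      || childB l x y || childB r x y

/-- `ancB t x y = true` iff `x` is a (strict) ancestor of `y` in `t`, i.e. `y` lies
in a subtree hanging from `x`. -/
def ancB : BTree → ℕ → ℕ → Bool
  | .nil, _, _ => false
  | .node v l r, x, y =>
      ((x == v) && (memB l y || memB r y)) || ancB l x y || ancB r x y

end BTree

/-- `x` is the leftmost-eligible extreme letter of `l`: the minimum or the maximum. -/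
def isExtreme (l : List ℕ) (x : ℕ) : Bool :=
  (l.min? == some x) || (l.max? == some x)

/-- Fuelled construction of the minmax tree of a list of distinct naturals:
split the list as `u ++ [m] ++ v` where `m` is the leftmost of the minimum and
maximum letters, put `m` at the root and recurse on `u` (left) and `v` (right). -/
def mmAux : ℕ → List ℕ → BTree
  | 0, _ => .nil
  | fuel+1, l =>
    if l.isEmpty then .nil
    else
      let k := l.findIdx (isExtreme l)
      .node (l.getD k 0) (mmAux fuel (l.take k)) (mmAux fuel (l.drop (k+1)))

/-- The minmax tree `T^m_p` of a word `l` (with distinct letters). -/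
def minmaxTree (l : List ℕ) : BTree := mmAux l.length l

/-- The word `p_1 p_2 … p_n` on the letters `{1,…,n}` associated to a permutation
`p` of `Fin n`. -/
def permList (n : ℕ) (p : Equiv.Perm (Fin n)) : List ℕ :=
  List.ofFn (fun i => (p i : ℕ) + 1)

/-- The `i`-th entry `p_i` (1-indexed) of the permutation `p`. -/
def entryAt (n : ℕ) (p : Equiv.Perm (Fin n)) (i : ℕ) : ℕ :=
  (permList n p).getD (i - 1) 0

/-!
The first letter `x` of a word becomes a root exactly when it is the leftmost extreme letter of
the current prefix, and then its left subtree is empty. So `x` has one child iff this prefix,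
`headSubtreeWord`, has at least two letters.

Rotating the first three letters `a b c` cyclically does not change which letters are extreme.
If none of them is extreme, all three rotations pass to the prefixes cut at the same position
of the tail. Otherwise the first letter is a leaf exactly when it is not extreme but the second
one is, and since at most two letters are extreme this happens for exactly one of the three
rotations. Summing over the orbits of `p ↦ p * (0 1 2)` gives `3 · #{good p} = 2 · n!`.
-/

theorem List.Perm.min?_eq {α : Type*} [LinearOrder α] {l l' : List α} (h : l.Perm l') :
    l.min? = l'.min? := by
  cases hm : l'.min? with
  | none => rw [List.min?_eq_none_iff] at hm ⊢; subst hm; exact h.eq_nil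
  | some a =>
    rw [List.min?_eq_some_iff] at hm ⊢
    exact ⟨h.mem_iff.mpr hm.1, fun b hb => hm.2 b (h.mem_iff.mp hb)⟩

theorem List.Perm.max?_eq {α : Type*} [LinearOrder α] {l l' : List α} (h : l.Perm l') :
    l.max? = l'.max? := by
  cases hm : l'.max? with
  | none => rw [List.max?_eq_none_iff] at hm ⊢; subst hm; exact h.eq_nil
  | some a =>
    rw [List.max?_eq_some_iff] at hm ⊢
    exact ⟨h.mem_iff.mpr hm.1, fun b hb => hm.2 b (h.mem_iff.mp hb)⟩

theorem isExtreme_of_perm {l l' : List ℕ} (h : l.Perm l') : isExtreme l = isExtreme l' := by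
  funext x
  rw [isExtreme, isExtreme, h.min?_eq, h.max?_eq]

theorem exists_mem_isExtreme {l : List ℕ} (h : l ≠ []) : ∃ x ∈ l, isExtreme l x := by
  obtain ⟨m, hm⟩ := Option.ne_none_iff_exists'.mp (mt List.min?_eq_none_iff.mp h)
  exact ⟨m, List.min?_mem hm, by simp [isExtreme, hm]⟩

theorem isExtreme_cons_self_of_length_le_one {x : ℕ} {l : List ℕ} (h : l.length ≤ 1) :
    isExtreme (x :: l) x := by
  match l with
  | [] => simp [isExtreme]
  | [y] => rcases le_total x y with hxy | hxy <;> simp [isExtreme, List.min?, List.max?, hxy]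

theorem not_three_isExtreme {l : List ℕ} {x y z : ℕ} (hxy : x ≠ y) (hxz : x ≠ z)
    (hyz : y ≠ z) :
    ¬ (isExtreme l x ∧ isExtreme l y ∧ isExtreme l z) := by
  rintro ⟨hx, hy, hz⟩
  simp only [isExtreme, Bool.or_eq_true, beq_iff_eq] at hx hy hz
  rcases hx with hx | hx <;> rcases hy with hy | hy <;> rcases hz with hz | hz <;> simp_all

theorem findIdx_isExtreme_lt_length {l : List ℕ} (h : l ≠ []) :
    l.findIdx (isExtreme l) < l.length :=
  List.findIdx_lt_length_of_exists (exists_mem_isExtreme h)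

/-- The word whose minmax tree is the subtree rooted at the first letter of `l`. -/
def headSubtreeWord (l : List ℕ) : List ℕ :=
  if l.findIdx (isExtreme l) = 0 then l
  else headSubtreeWord (l.take (l.findIdx (isExtreme l)))
termination_by l.length
decreasing_by
  rename_i h
  have : l ≠ [] := by rintro rfl; simp at h
  have := findIdx_isExtreme_lt_length this
  simp only [List.length_take]; omega

theorem headSubtreeWord_cons_of_isExtreme {x : ℕ} {l : List ℕ} (h : isExtreme (x :: l) x) :
    headSubtreeWord (x :: l) = x :: l := by
  rw [headSubtreeWord, if_pos (by simp [List.findIdx_cons, h])]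

theorem headSubtreeWord_of_findIdx_ne_zero {l : List ℕ} (h : l.findIdx (isExtreme l) ≠ 0) :
    headSubtreeWord l = headSubtreeWord (l.take (l.findIdx (isExtreme l))) := by
  rw [headSubtreeWord, if_neg h]

theorem numChildren_mmAux_of_not_mem (f : ℕ) {l : List ℕ} {x : ℕ} (hx : x ∉ l) :
    (mmAux f l).numChildren x = 0 := by
  induction f generalizing l with
  | zero => rfl
  | succ f ih =>
    rcases eq_or_ne l [] with rfl | hl
    · rfl
    have hroot : l.getD (l.findIdx (isExtreme l)) 0 ∈ l := by
      rw [List.getD_eq_getElem _ _ (findIdx_isExtreme_lt_length hl)]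
      exact List.getElem_mem _
    simp only [mmAux, List.isEmpty_iff, hl, if_false, BTree.numChildren,
      if_neg (ne_of_mem_of_not_mem hroot hx).symm]
    rw [ih (fun h => hx (List.mem_of_mem_take h)), ih (fun h => hx (List.mem_of_mem_drop h))]

theorem mmAux_eq_nil_iff {f : ℕ} {l : List ℕ} (h : l.length ≤ f) :
    mmAux f l = .nil ↔ l = [] := by
  rcases l with _ | ⟨a, l⟩
  · cases f <;> simp [mmAux]
  · obtain ⟨f, rfl⟩ : ∃ g, f = g + 1 :=
      ⟨f - 1, by simp only [List.length_cons] at h; omega⟩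
    simp [mmAux]

theorem numChildren_mmAux_cons_self {f x : ℕ} {l : List ℕ} (hf : (x :: l).length ≤ f)
    (hnd : (x :: l).Nodup) :
    (mmAux f (x :: l)).numChildren x =
      if 2 ≤ (headSubtreeWord (x :: l)).length then 1 else 0 := by
  induction f generalizing l with
  | zero => simp at hf
  | succ f ih =>
    have hklt := findIdx_isExtreme_lt_length (List.cons_ne_nil x l)
    have hxl : x ∉ l := (List.nodup_cons.mp hnd).1
    simp only [mmAux, List.isEmpty_cons, Bool.false_eq_true, if_false, BTree.numChildren]
    rcases hk : (x :: l).findIdx (isExtreme (x :: l)) with _ | j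
    · have hroot : isExtreme (x :: l) x := by
        cases h : isExtreme (x :: l) x
        · simp [List.findIdx_cons, h] at hk
        · rfl
      rw [headSubtreeWord_cons_of_isExtreme hroot]
      simp only [List.getD_cons_zero, if_true, List.take_zero, List.drop_succ_cons,
        List.drop_zero, mmAux_eq_nil_iff (List.length_nil.trans_le (Nat.zero_le f)),
        mmAux_eq_nil_iff (Nat.le_of_succ_le_succ hf)]
      rcases l with _ | ⟨y, l⟩ <;> simp
    · rw [hk] at hklt
      have hjl : j < l.length := by simpa using hklt
      have hroot : x ≠ l.getD j 0 := by
        rw [List.getD_eq_getElem _ _ hjl]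
        exact ne_of_mem_of_not_mem (List.getElem_mem hjl) hxl |>.symm
      rw [headSubtreeWord_of_findIdx_ne_zero (by omega), hk]
      simp only [List.getD_cons_succ, if_neg hroot, List.take_succ_cons, List.drop_succ_cons,
        numChildren_mmAux_of_not_mem f (fun h => hxl (List.mem_of_mem_drop h)), add_zero]
      exact ih (by simp only [List.length_cons, List.length_take]; omega)
        (hnd.sublist ((List.take_sublist j l).cons_cons x))

theorem numChildren_minmaxTree_cons_self_eq_one_iff {x : ℕ} {l : List ℕ}
    (hnd : (x :: l).Nodup) :
    (minmaxTree (x :: l)).numChildren x = 1 ↔ 2 ≤ (headSubtreeWord (x :: l)).length := by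
  rw [minmaxTree, numChildren_mmAux_cons_self le_rfl hnd]
  split_ifs with h <;> simp [h]

section ThreeLetters

variable {x y z : ℕ} {t : List ℕ}

theorem two_le_length_headSubtreeWord_iff
    (h : isExtreme (x :: y :: z :: t) x ∨ isExtreme (x :: y :: z :: t) y ∨
      isExtreme (x :: y :: z :: t) z) :
    2 ≤ (headSubtreeWord (x :: y :: z :: t)).length ↔
      isExtreme (x :: y :: z :: t) x ∨ ¬ isExtreme (x :: y :: z :: t) y := by
  cases hx : isExtreme (x :: y :: z :: t) x
  · have hx' : isExtreme [x] x := isExtreme_cons_self_of_length_le_one (by simp)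
    have hxy : isExtreme [x, y] x := isExtreme_cons_self_of_length_le_one (by simp)
    cases hy : isExtreme (x :: y :: z :: t) y
    · have hz : isExtreme (x :: y :: z :: t) z := by simpa [hx, hy] using h
      rw [headSubtreeWord_of_findIdx_ne_zero (by simp [List.findIdx_cons, hx, hy, hz])]
      simp [List.findIdx_cons, hx, hy, hz, headSubtreeWord_cons_of_isExtreme hxy]
    · rw [headSubtreeWord_of_findIdx_ne_zero (by simp [List.findIdx_cons, hx, hy])]
      simp [List.findIdx_cons, hx, hy, headSubtreeWord_cons_of_isExtreme hx']
  · simp [headSubtreeWord_cons_of_isExtreme hx]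

theorem headSubtreeWord_eq_of_not_isExtreme (hx : isExtreme (x :: y :: z :: t) x = false)
    (hy : isExtreme (x :: y :: z :: t) y = false) (hz : isExtreme (x :: y :: z :: t) z = false) :
    headSubtreeWord (x :: y :: z :: t) =
      headSubtreeWord (x :: y :: z :: t.take (t.findIdx (isExtreme (x :: y :: z :: t)))) := by
  rw [headSubtreeWord_of_findIdx_ne_zero (by simp [List.findIdx_cons, hx, hy, hz])]
  simp [List.findIdx_cons, hx, hy, hz]

end ThreeLetters

theorem headSubtreeWord_rotations_count (t : List ℕ) {a b c : ℕ}
    (hnd : (a :: b :: c :: t).Nodup) :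
    ((if 2 ≤ (headSubtreeWord (a :: b :: c :: t)).length then 1 else 0) +
      (if 2 ≤ (headSubtreeWord (b :: c :: a :: t)).length then 1 else 0) +
      (if 2 ≤ (headSubtreeWord (c :: a :: b :: t)).length then 1 else 0) : ℕ) = 2 := by
  have hbca : isExtreme (b :: c :: a :: t) = isExtreme (a :: b :: c :: t) :=
    isExtreme_of_perm (List.perm_middle (l₁ := [b, c]))
  have hcab : isExtreme (c :: a :: b :: t) = isExtreme (a :: b :: c :: t) :=
    (isExtreme_of_perm (List.perm_middle (l₁ := [a, b]))).symm
  by_cases hex : isExtreme (a :: b :: c :: t) a ∨ isExtreme (a :: b :: c :: t) b ∨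
      isExtreme (a :: b :: c :: t) c
  · simp only [two_le_length_headSubtreeWord_iff hex,
      two_le_length_headSubtreeWord_iff (by rw [hbca]; tauto),
      two_le_length_headSubtreeWord_iff (by rw [hcab]; tauto), hbca, hcab]
    obtain ⟨⟨hab, hac, -⟩, ⟨hbc, -⟩, -⟩ := by
      simpa only [List.nodup_cons, List.mem_cons, not_or] using hnd
    have := not_three_isExtreme (l := a :: b :: c :: t) hab hac hbc
    revert hex this
    cases isExtreme (a :: b :: c :: t) a <;> cases isExtreme (a :: b :: c :: t) b <;>
      cases isExtreme (a :: b :: c :: t) c <;> simp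
  · simp only [not_or, Bool.not_eq_true] at hex
    obtain ⟨ha, hb, hc⟩ := hex
    have hkt : t.findIdx (isExtreme (a :: b :: c :: t)) < t.length := by
      obtain ⟨x, hx, hex⟩ := exists_mem_isExtreme (List.cons_ne_nil a (b :: c :: t))
      refine List.findIdx_lt_length_of_exists ⟨x, ?_, hex⟩
      simp only [List.mem_cons] at hx
      rcases hx with rfl | rfl | rfl | hx <;> simp_all
    rw [headSubtreeWord_eq_of_not_isExtreme ha hb hc,
      headSubtreeWord_eq_of_not_isExtreme (x := b) (by rwa [hbca]) (by rwa [hbca])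
        (by rwa [hbca]),
      headSubtreeWord_eq_of_not_isExtreme (x := c) (by rwa [hcab]) (by rwa [hcab])
        (by rwa [hcab]),
      hbca, hcab]
    exact headSubtreeWord_rotations_count _
      (hnd.sublist (((List.take_sublist _ t).cons_cons c).cons_cons b |>.cons_cons a))
termination_by t.length
decreasing_by simp only [List.length_take]; omega

theorem Equiv.Perm.nsmul_sum_eq_of_orbit_sum {α M : Type*} [Fintype α] [AddCommMonoid M]
    (σ : Equiv.Perm α) (f : α → M) (k : M) (h : ∀ x, f x + f (σ x) + f (σ (σ x)) = k) :
    3 • ∑ x, f x = Fintype.card α • k := by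
  have hσ : ∑ x, f (σ x) = ∑ x, f x := Equiv.sum_comp σ f
  have hσσ : ∑ x, f (σ (σ x)) = ∑ x, f x := Equiv.sum_comp (σ.trans σ) f
  calc 3 • ∑ x, f x = ∑ x, (f x + f (σ x) + f (σ (σ x))) := by
        rw [Finset.sum_add_distrib, Finset.sum_add_distrib, hσ, hσσ, succ_nsmul, two_nsmul]
    _ = Fintype.card α • k := by simp [h]

theorem permList_nodup (n : ℕ) (p : Equiv.Perm (Fin n)) : (permList n p).Nodup :=
  List.nodup_ofFn.mpr fun _ _ h => p.injective (Fin.val_injective (Nat.add_right_cancel h))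

theorem numChildren_entryAt_one_eq_one_iff (n : ℕ) (p : Equiv.Perm (Fin n)) :
    (minmaxTree (permList n p)).numChildren (entryAt n p 1) = 1 ↔
      2 ≤ (headSubtreeWord (permList n p)).length := by
  have hnd := permList_nodup n p
  rw [entryAt]
  generalize permList n p = l at hnd ⊢
  rcases l with _ | ⟨x, l⟩
  · rw [headSubtreeWord]
    simp [minmaxTree, mmAux, BTree.numChildren]
  · exact numChildren_minmaxTree_cons_self_eq_one_iff hnd

theorem permList_mul_cycleRange_two {m a b c : ℕ} {t : List ℕ} {p : Equiv.Perm (Fin (m + 3))}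
    (h : permList (m + 3) p = a :: b :: c :: t) :
    permList (m + 3) (p * Fin.cycleRange 2) = b :: c :: a :: t := by
  simp only [permList, List.ofFn_succ, List.cons.injEq] at h ⊢
  obtain ⟨rfl, rfl, rfl, rfl⟩ := h
  have hc0 : Fin.cycleRange (2 : Fin (m + 3)) 0 = 1 := by
    rw [Fin.cycleRange_of_lt (by rw [Fin.lt_def, Fin.val_two]; simp), zero_add]
  have hc1 : Fin.cycleRange (2 : Fin (m + 3)) 1 = 2 := by
    rw [Fin.cycleRange_of_lt (by rw [Fin.lt_def, Fin.val_two]; simp)]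
    rfl
  have hcsucc (i : Fin m) : Fin.cycleRange (2 : Fin (m + 3)) i.succ.succ.succ = i.succ.succ.succ :=
    Fin.cycleRange_of_gt (by rw [Fin.lt_def, Fin.val_two]; simp)
  simp [Fin.succ_zero_eq_one, Fin.succ_one_eq_two, Equiv.Perm.mul_apply, hc0, hc1, hcsucc]

/-- For `n ≥ 3`, the number of permutations `p` of `{1,…,n}` in
which the first entry `p_1` has exactly one child in the minmax tree is `2·n!/3`. -/
theorem first_entry_one_child_count (n : ℕ) (hn : 3 ≤ n) :
    (Finset.univ.filter (fun p : Equiv.Perm (Fin n) =>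
        (minmaxTree (permList n p)).numChildren (entryAt n p 1) = 1)).card =
      2 * n.factorial / 3 := by
  obtain ⟨m, rfl⟩ : ∃ m, n = m + 3 := ⟨n - 3, by omega⟩
  set f : Equiv.Perm (Fin (m + 3)) → ℕ :=
    fun p => if 2 ≤ (headSubtreeWord (permList (m + 3) p)).length then 1 else 0
  have hrot (p : Equiv.Perm (Fin (m + 3))) :
      f p + f (p * Fin.cycleRange 2) + f (p * Fin.cycleRange 2 * Fin.cycleRange 2) = 2 := by
    obtain ⟨a, b, c, t, h⟩ : ∃ a b c t, permList (m + 3) p = a :: b :: c :: t :=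
      ⟨_, _, _, _, by rw [permList, List.ofFn_succ, List.ofFn_succ, List.ofFn_succ]⟩
    have hbca := permList_mul_cycleRange_two h
    simp only [f, h, hbca, permList_mul_cycleRange_two hbca]
    exact headSubtreeWord_rotations_count t (h ▸ permList_nodup _ p)
  have hcount := (Equiv.mulRight (Fin.cycleRange 2)).nsmul_sum_eq_of_orbit_sum f 2 hrot
  rw [smul_eq_mul, smul_eq_mul, Fintype.card_perm, Fintype.card_fin] at hcount
  rw [Finset.filter_congr (fun p _ => numChildren_entryAt_one_eq_one_iff _ p),
    Finset.card_filter]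
  change ∑ p, f p = _
  omega
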